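/- arXiv:1706.00938 — 5 statements merged into one kernel-verified Lean document; each statement's English description precedes it below -/
import Mathlib

section
/- Energy conservation of the measuring process (Lemma 1, 'if' direction): Let H_S be a Hermitian d_S×d_S complex matrix and H_D a Hermitian d_D×d_D complex matrix, let ψ ∈ ℂ^{d_D} be a unit vector, let U be a unitary matrix on ℂ^{d_S} ⊗ ℂ^{d_D} with [U, H_S ⊗ 1 + 1 ⊗ H_D] = 0, and let {P_x}_{x∈X} be a complete orthogonal family of projections on ℂ^{d_D} with [P_x, H_D] = 0 for every x. Then for every density matrix ρ_S on ℂ^{d_S}, tr[(H_S ⊗ 1 + 1 ⊗ H_D) · ∑_{x∈X} (1 ⊗ P_x) U (ρ_S ⊗ |ψ⟩⟨ψ|) U† (1 ⊗ P_x)] = tr[(H_S ⊗ 1 + 1 ⊗ H_D) (ρ_S ⊗ |ψ⟩⟨ψ|)]. -/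
open Matrix
open scoped Kronecker Matrix ComplexOrder

noncomputable section

/-- A density matrix: positive semidefinite with unit trace. -/
def IsDensityMatrix {n : Type*} [Fintype n] (ρ : Matrix n n ℂ) : Prop :=
  ρ.PosSemidef ∧ ρ.trace = 1

/-- von Neumann entropy `S(ρ) = -∑ λᵢ log λᵢ` (junk value 0 if not Hermitian). -/
noncomputable def vnEntropy {n : Type*} [Fintype n] [DecidableEq n]
    (ρ : Matrix n n ℂ) : ℝ :=
  if h : ρ.IsHermitian then -∑ i, (h.eigenvalues i) * Real.log (h.eigenvalues i) else 0

/-- Non-equilibrium free energy `F(ρ) = tr(Hρ) - kT S(ρ)`. -/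
noncomputable def freeEnergy {n : Type*} [Fintype n] [DecidableEq n]
    (kT : ℝ) (H ρ : Matrix n n ℂ) : ℝ :=
  (Matrix.trace (H * ρ)).re - kT * vnEntropy ρ

/-- Least eigenvalue of a Hermitian matrix (junk value 0 if not Hermitian). -/
noncomputable def lambdaMin {n : Type*} [Fintype n] [DecidableEq n]
    (H : Matrix n n ℂ) : ℝ :=
  if h : H.IsHermitian then ⨅ i, h.eigenvalues i else 0

/-- Partial trace over the second tensor factor. -/
def ptrace2 {m n : Type*} [Fintype n]
    (σ : Matrix (m × n) (m × n) ℂ) : Matrix m m ℂ :=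
  fun i j => ∑ k, σ (i, k) (j, k)

/-- Partial trace over the first tensor factor. -/
def ptrace1 {m n : Type*} [Fintype m]
    (σ : Matrix (m × n) (m × n) ℂ) : Matrix n n ℂ :=
  fun k l => ∑ i, σ (i, k) (i, l)

/-- Outer product `|v⟩⟨v|`. -/
def outer {n : Type*} (v : n → ℂ) : Matrix n n ℂ :=
  Matrix.vecMulVec v (star v)

/-- Kronecker product of vectors. -/
def kronVec {m n : Type*} (v : m → ℂ) (w : n → ℂ) : m × n → ℂ :=
  fun p => v p.1 * w p.2

/-- Lemma 1 ('if' direction): if the premeasurement unitary commutes with the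
additive Hamiltonian and each objectification projection commutes with the demon
Hamiltonian, then the measuring process conserves energy. -/
theorem measurement_energy_conserving
    {dS dD : ℕ} {X : Type*} [Fintype X]
    (HS : Matrix (Fin dS) (Fin dS) ℂ) (HD : Matrix (Fin dD) (Fin dD) ℂ)
    (hHS : HS.IsHermitian) (hHD : HD.IsHermitian)
    (ψ : Fin dD → ℂ) (hψ : star ψ ⬝ᵥ ψ = 1)
    (U : Matrix (Fin dS × Fin dD) (Fin dS × Fin dD) ℂ)
    (hU : U ∈ Matrix.unitaryGroup (Fin dS × Fin dD) ℂ)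
    (hUcomm : U * (HS ⊗ₖ (1 : Matrix (Fin dD) (Fin dD) ℂ)
        + (1 : Matrix (Fin dS) (Fin dS) ℂ) ⊗ₖ HD)
      = (HS ⊗ₖ (1 : Matrix (Fin dD) (Fin dD) ℂ)
        + (1 : Matrix (Fin dS) (Fin dS) ℂ) ⊗ₖ HD) * U)
    (P : X → Matrix (Fin dD) (Fin dD) ℂ)
    (hPherm : ∀ x, (P x).IsHermitian)
    (hPidem : ∀ x, P x * P x = P x)
    (hPorth : ∀ x y, x ≠ y → P x * P y = 0)
    (hPsum : ∑ x, P x = 1)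
    (hPcomm : ∀ x, P x * HD = HD * P x)
    (ρS : Matrix (Fin dS) (Fin dS) ℂ) (hρS : IsDensityMatrix ρS) :
    Matrix.trace ((HS ⊗ₖ (1 : Matrix (Fin dD) (Fin dD) ℂ)
        + (1 : Matrix (Fin dS) (Fin dS) ℂ) ⊗ₖ HD) *
      ∑ x, ((1 : Matrix (Fin dS) (Fin dS) ℂ) ⊗ₖ P x)
        * (U * (ρS ⊗ₖ outer ψ) * Uᴴ)
        * ((1 : Matrix (Fin dS) (Fin dS) ℂ) ⊗ₖ P x))
    = Matrix.trace ((HS ⊗ₖ (1 : Matrix (Fin dD) (Fin dD) ℂ)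
        + (1 : Matrix (Fin dS) (Fin dS) ℂ) ⊗ₖ HD) * (ρS ⊗ₖ outer ψ)) := by
  set K := HS ⊗ₖ (1 : Matrix (Fin dD) (Fin dD) ℂ)
      + (1 : Matrix (Fin dS) (Fin dS) ℂ) ⊗ₖ HD with hK
  set ρ := ρS ⊗ₖ outer ψ with hρ
  have hQcomm : ∀ x, ((1 : Matrix (Fin dS) (Fin dS) ℂ) ⊗ₖ P x) * K
      = K * ((1 : Matrix (Fin dS) (Fin dS) ℂ) ⊗ₖ P x) := by
    intro x
    simp only [hK, mul_add, add_mul, ← Matrix.mul_kronecker_mul, Matrix.one_mul,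
      Matrix.mul_one, hPcomm x]
  have hUU : Uᴴ * U = 1 := hU.1
  have hQsum : ∑ x, ((1 : Matrix (Fin dS) (Fin dS) ℂ) ⊗ₖ P x)
      = (1 : Matrix (Fin dS × Fin dD) (Fin dS × Fin dD) ℂ) := by
    have : ((1 : Matrix (Fin dS) (Fin dS) ℂ) ⊗ₖ (∑ x, P x))
        = (1 : Matrix (Fin dS × Fin dD) (Fin dS × Fin dD) ℂ) := by
      rw [hPsum, Matrix.one_kronecker_one]
    rw [← this]
    ext ⟨i, k⟩ ⟨j, l⟩
    simp [Matrix.sum_apply, Matrix.kroneckerMap_apply, Finset.mul_sum]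
  have step1 : ∀ x, Matrix.trace (K * (((1 : Matrix (Fin dS) (Fin dS) ℂ) ⊗ₖ P x)
        * (U * ρ * Uᴴ) * ((1 : Matrix (Fin dS) (Fin dS) ℂ) ⊗ₖ P x)))
      = Matrix.trace (K * (((1 : Matrix (Fin dS) (Fin dS) ℂ) ⊗ₖ P x) * (U * ρ * Uᴴ))) := by
    intro x
    conv_lhs => rw [← mul_assoc]
    rw [Matrix.trace_mul_comm]
    conv_lhs => rw [← mul_assoc, hQcomm x, ← mul_assoc, mul_assoc K,
      ← Matrix.mul_kronecker_mul, Matrix.one_mul, hPidem x, mul_assoc]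
  calc Matrix.trace (K * ∑ x, ((1 : Matrix (Fin dS) (Fin dS) ℂ) ⊗ₖ P x)
        * (U * ρ * Uᴴ) * ((1 : Matrix (Fin dS) (Fin dS) ℂ) ⊗ₖ P x))
      = ∑ x, Matrix.trace (K * (((1 : Matrix (Fin dS) (Fin dS) ℂ) ⊗ₖ P x)
        * (U * ρ * Uᴴ) * ((1 : Matrix (Fin dS) (Fin dS) ℂ) ⊗ₖ P x))) := by
        rw [Finset.mul_sum, Matrix.trace_sum]
    _ = ∑ x, Matrix.trace (K * (((1 : Matrix (Fin dS) (Fin dS) ℂ) ⊗ₖ P x)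
        * (U * ρ * Uᴴ))) := by
        exact Finset.sum_congr rfl fun x _ => step1 x
    _ = Matrix.trace (K * ((∑ x, ((1 : Matrix (Fin dS) (Fin dS) ℂ) ⊗ₖ P x))
        * (U * ρ * Uᴴ))) := by
        rw [Finset.sum_mul, Finset.mul_sum, Matrix.trace_sum]
    _ = Matrix.trace (K * (U * ρ * Uᴴ)) := by rw [hQsum, Matrix.one_mul]
    _ = Matrix.trace (K * ρ) := by
        conv_lhs => rw [← mul_assoc, ← mul_assoc, ← hUcomm]
        rw [Matrix.trace_mul_comm]
        conv_lhs => rw [← mul_assoc, ← mul_assoc, hUU, Matrix.one_mul]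
end
end

section
/- Wigner–Araki–Yanase constraint on repeatable, energy-conserving measurements (Lemma 2, 'only if' direction): Let {φ_x}_{x∈X} be an orthonormal basis of ℂ^{d_S}, let ψ ∈ ℂ^{d_D} be a unit vector, let H_S and H_D be Hermitian matrices on ℂ^{d_S} and ℂ^{d_D} respectively, let {P_x}_{x∈X} be a complete orthogonal family of projections on ℂ^{d_D} with [P_x, H_D] = 0 for every x, and for each x let φ̃_x ∈ ℂ^{d_S} and ψ_x ∈ ℂ^{d_D} be unit vectors with P_x ψ_x = ψ_x. Suppose U is a unitary on ℂ^{d_S} ⊗ ℂ^{d_D} satisfying U(φ_x ⊗ ψ) = φ̃_x ⊗ ψ_x for all x, and [U, H_S ⊗ 1 + 1 ⊗ H_D] = 0. Then ⟨φ_x, H_S φ_y⟩ = 0 for all x ≠ y; consequently every φ_x is an eigenvector of H_S. -/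
open Matrix
open scoped Kronecker Matrix ComplexOrder

noncomputable section

lemma kronVec_star_dot {m n : Type*} [Fintype m] [Fintype n]
    (a c : m → ℂ) (b d : n → ℂ) :
    star (kronVec a b) ⬝ᵥ kronVec c d = (star a ⬝ᵥ c) * (star b ⬝ᵥ d) := by
  simp only [dotProduct, kronVec, Pi.star_apply, star_mul', Fintype.sum_prod_type]
  rw [Finset.sum_mul_sum]
  exact Finset.sum_congr rfl fun i _ => Finset.sum_congr rfl fun k _ => by ring

lemma kron_mulVec {m n : Type*} [Fintype m] [Fintype n]
    (A : Matrix m m ℂ) (B : Matrix n n ℂ) (u : m → ℂ) (v : n → ℂ) :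
    (A ⊗ₖ B) *ᵥ kronVec u v = kronVec (A *ᵥ u) (B *ᵥ v) := by
  ext ⟨i, k⟩
  simp only [mulVec, dotProduct, kronVec, kroneckerMap_apply, Fintype.sum_prod_type]
  rw [Finset.sum_mul_sum]
  exact Finset.sum_congr rfl fun j _ => Finset.sum_congr rfl fun l _ => by ring

/-- Lemma 2 ('only if' direction), via the WAY theorem: a repeatable,
energy-conserving measurement forces the measured basis to consist of
eigenvectors of the system Hamiltonian. -/
theorem WAY_repeatable_measurement
    {dS dD : ℕ} {X : Type*} [Fintype X] [DecidableEq X]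
    (φ : X → (Fin dS → ℂ))
    (hcard : Fintype.card X = dS)
    (hφON : ∀ x y, star (φ x) ⬝ᵥ φ y = if x = y then 1 else 0)
    (ψ : Fin dD → ℂ) (hψ : star ψ ⬝ᵥ ψ = 1)
    (HS : Matrix (Fin dS) (Fin dS) ℂ) (HD : Matrix (Fin dD) (Fin dD) ℂ)
    (hHS : HS.IsHermitian) (hHD : HD.IsHermitian)
    (P : X → Matrix (Fin dD) (Fin dD) ℂ)
    (hPherm : ∀ x, (P x).IsHermitian)
    (hPidem : ∀ x, P x * P x = P x)
    (hPorth : ∀ x y, x ≠ y → P x * P y = 0)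
    (hPsum : ∑ x, P x = 1)
    (hPcomm : ∀ x, P x * HD = HD * P x)
    (φt : X → (Fin dS → ℂ)) (hφt : ∀ x, star (φt x) ⬝ᵥ φt x = 1)
    (ψv : X → (Fin dD → ℂ)) (hψv : ∀ x, star (ψv x) ⬝ᵥ ψv x = 1)
    (hPψv : ∀ x, (P x).mulVec (ψv x) = ψv x)
    (U : Matrix (Fin dS × Fin dD) (Fin dS × Fin dD) ℂ)
    (hU : U ∈ Matrix.unitaryGroup (Fin dS × Fin dD) ℂ)
    (hUact : ∀ x, U.mulVec (kronVec (φ x) ψ) = kronVec (φt x) (ψv x))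
    (hUcomm : U * (HS ⊗ₖ (1 : Matrix (Fin dD) (Fin dD) ℂ)
        + (1 : Matrix (Fin dS) (Fin dS) ℂ) ⊗ₖ HD)
      = (HS ⊗ₖ (1 : Matrix (Fin dD) (Fin dD) ℂ)
        + (1 : Matrix (Fin dS) (Fin dS) ℂ) ⊗ₖ HD) * U) :
    (∀ x y, x ≠ y → star (φ x) ⬝ᵥ HS.mulVec (φ y) = 0) ∧
    (∀ x, ∃ μ : ℝ, HS.mulVec (φ x) = (μ : ℂ) • φ x) := by
  classical
  set H := HS ⊗ₖ (1 : Matrix (Fin dD) (Fin dD) ℂ)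
      + (1 : Matrix (Fin dS) (Fin dS) ℂ) ⊗ₖ HD with hH
  -- sandwich identity
  have hsand : star U * (H * U) = H := by
    rw [← hUcomm, ← mul_assoc, hU.1, one_mul]
  have key : ∀ v w : (Fin dS × Fin dD → ℂ),
      star (U *ᵥ v) ⬝ᵥ (H *ᵥ (U *ᵥ w)) = star v ⬝ᵥ (H *ᵥ w) := by
    intro v w
    rw [mulVec_mulVec, star_mulVec, ← dotProduct_mulVec, mulVec_mulVec,
      Matrix.star_eq_conjTranspose] at *
    rw [show Uᴴ * (H * U) = H from hsand]
  have energy : ∀ (a : Fin dS → ℂ) (b : Fin dD → ℂ) (c : Fin dS → ℂ) (d : Fin dD → ℂ),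
      star (kronVec a b) ⬝ᵥ (H *ᵥ kronVec c d)
        = (star a ⬝ᵥ HS *ᵥ c) * (star b ⬝ᵥ d) + (star a ⬝ᵥ c) * (star b ⬝ᵥ HD *ᵥ d) := by
    intro a b c d
    rw [hH, add_mulVec, dotProduct_add, kron_mulVec, kron_mulVec,
      one_mulVec, one_mulVec, kronVec_star_dot, kronVec_star_dot]
  have psidot : ∀ x y, x ≠ y → star (ψv x) ⬝ᵥ ψv y = 0 := by
    intro x y hxy
    rw [← hPψv x, ← hPψv y, star_mulVec, ← dotProduct_mulVec, mulVec_mulVec,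
      (hPherm x).eq, hPorth x y hxy, zero_mulVec, dotProduct_zero]
  have psiHdot : ∀ x y, x ≠ y → star (ψv x) ⬝ᵥ HD *ᵥ ψv y = 0 := by
    intro x y hxy
    rw [← hPψv x, ← hPψv y, star_mulVec, ← dotProduct_mulVec, mulVec_mulVec,
      mulVec_mulVec, (hPherm x).eq, hPcomm x, mul_assoc,
      hPorth x y hxy, mul_zero, zero_mulVec, dotProduct_zero]
  have orth : ∀ x y, x ≠ y → star (φ x) ⬝ᵥ HS *ᵥ φ y = 0 := by
    intro x y hxy
    have h1 := key (kronVec (φ x) ψ) (kronVec (φ y) ψ)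
    rw [hUact x, hUact y, energy, energy, psidot x y hxy, psiHdot x y hxy,
      hψ, hφON x y, if_neg hxy] at h1
    simpa using h1.symm
  -- completeness of the orthonormal basis
  set W : Matrix X (Fin dS) ℂ := Matrix.of (fun x i => star (φ x i)) with hW
  have hWW : W * Wᴴ = 1 := by
    ext x y
    have := hφON x y
    simp only [dotProduct, Pi.star_apply] at this
    simp only [Matrix.mul_apply, Matrix.conjTranspose_apply, hW, Matrix.of_apply,
      star_star, Matrix.one_apply]
    exact this
  obtain e := Fintype.equivFinOfCardEq hcard
  set W' : Matrix (Fin dS) (Fin dS) ℂ := W.submatrix e.symm id with hW'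
  have h1 : W' * W'ᴴ = 1 := by
    have hsub : W' * W'ᴴ = (W * Wᴴ).submatrix e.symm e.symm := by
      ext i j
      simp [hW', Matrix.mul_apply, Matrix.conjTranspose_apply, Matrix.submatrix_apply]
    rw [hsub, hWW]
    ext i j
    simp [Matrix.one_apply, Matrix.submatrix_apply, Equiv.symm_apply_eq]
  have h2 : W'ᴴ * W' = 1 := mul_eq_one_comm.mp h1
  have hcomp : Wᴴ * W = 1 := by
    ext i j
    have := congrFun (congrFun h2 i) j
    simp only [Matrix.mul_apply, Matrix.conjTranspose_apply, hW', Matrix.submatrix_apply,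
      id_eq] at this
    rw [Matrix.mul_apply]
    rw [← Fintype.sum_equiv e.symm (fun k => star (W (e.symm k) i) * W (e.symm k) j)
      (fun x => (Wᴴ i x) * W x j) (fun k => by simp [Matrix.conjTranspose_apply])] at *
    rw [this]
  have hcv : ∀ w : Fin dS → ℂ, ∑ x, (star (φ x) ⬝ᵥ w) • φ x = w := by
    intro w
    have h3 : (Wᴴ * W) *ᵥ w = w := by rw [hcomp, one_mulVec]
    rw [← mulVec_mulVec] at h3
    funext i
    have h4 := congrFun h3 i
    simp only [mulVec, dotProduct, Matrix.conjTranspose_apply, hW, Matrix.of_apply,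
      star_star] at h4
    simp only [Finset.sum_apply, Pi.smul_apply, smul_eq_mul, dotProduct, Pi.star_apply]
    rw [← h4]
    exact Finset.sum_congr rfl fun x _ => mul_comm _ _
  refine ⟨orth, fun x => ?_⟩
  set c := star (φ x) ⬝ᵥ HS *ᵥ φ x with hc
  have hreal : (starRingEnd ℂ) c = c := by
    have h5 : star c = star (HS *ᵥ φ x) ⬝ᵥ φ x := by
      rw [hc, star_dotProduct (φ x) (HS *ᵥ φ x)]
      exact star_star _
    calc (starRingEnd ℂ) c = star (HS *ᵥ φ x) ⬝ᵥ φ x := h5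
      _ = star (φ x) ᵥ* HSᴴ ⬝ᵥ φ x := by rw [star_mulVec]
      _ = star (φ x) ⬝ᵥ HSᴴ *ᵥ φ x := by rw [dotProduct_mulVec]
      _ = c := by rw [hHS.eq]
  have hexp : HS *ᵥ φ x = ∑ y, (star (φ y) ⬝ᵥ HS *ᵥ φ x) • φ y := (hcv _).symm
  rw [Finset.sum_eq_single x (fun y _ hyx => by rw [orth y x hyx, zero_smul])
    (fun h => absurd (Finset.mem_univ x) h)] at hexp
  exact ⟨c.re, by rw [hexp, Complex.conj_eq_iff_re.mp hreal]⟩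
end
end

section
/- Energy conservation of feedback, necessity, part (i) (from the proof of Lemma 4): Let H_WS be a Hermitian matrix on ℂ^m and H_D a Hermitian matrix on ℂ^{d_D}. Let {P_x}_{x∈X} be a complete orthogonal family of nonzero projections on ℂ^{d_D}, let U_x be unitary matrices on ℂ^m, and set V := ∑_{x∈X} U_x ⊗ P_x. If [V, H_WS ⊗ 1 + 1 ⊗ H_D] = 0, then [U_x, H_WS] = 0 for every x ∈ X. -/
open Matrix
open scoped Kronecker Matrix ComplexOrder

noncomputable section

/-- Lemma 4, necessity part (i): if the feedback unitary `V = ∑ x, U_x ⊗ P_x`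
conserves the total energy, then every conditional unitary `U_x` commutes with
the weight-plus-system Hamiltonian. -/
theorem feedback_energy_conserving_only_if_i
    {m dD : ℕ} {X : Type*} [Fintype X]
    (HWS : Matrix (Fin m) (Fin m) ℂ) (HD : Matrix (Fin dD) (Fin dD) ℂ)
    (hHWS : HWS.IsHermitian) (hHD : HD.IsHermitian)
    (P : X → Matrix (Fin dD) (Fin dD) ℂ)
    (hPherm : ∀ x, (P x).IsHermitian)
    (hPidem : ∀ x, P x * P x = P x)
    (hPorth : ∀ x y, x ≠ y → P x * P y = 0)
    (hPsum : ∑ x, P x = 1)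
    (hPne : ∀ x, P x ≠ 0)
    (U : X → Matrix (Fin m) (Fin m) ℂ)
    (hU : ∀ x, U x ∈ Matrix.unitaryGroup (Fin m) ℂ)
    (hVcomm : (∑ x, U x ⊗ₖ P x) * (HWS ⊗ₖ (1 : Matrix (Fin dD) (Fin dD) ℂ)
        + (1 : Matrix (Fin m) (Fin m) ℂ) ⊗ₖ HD)
      = (HWS ⊗ₖ (1 : Matrix (Fin dD) (Fin dD) ℂ)
        + (1 : Matrix (Fin m) (Fin m) ℂ) ⊗ₖ HD) * (∑ x, U x ⊗ₖ P x)) :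
    ∀ x, U x * HWS = HWS * U x := by
  intro x
  set V : Matrix (Fin m × Fin dD) (Fin m × Fin dD) ℂ := ∑ y, U y ⊗ₖ P y with hV
  have hPV : ((1 : Matrix (Fin m) (Fin m) ℂ) ⊗ₖ P x) * V = U x ⊗ₖ P x := by
    rw [hV, Finset.mul_sum]
    rw [Finset.sum_eq_single x]
    · rw [← Matrix.mul_kronecker_mul, one_mul, hPidem]
    · intro y _ hy
      rw [← Matrix.mul_kronecker_mul, one_mul, hPorth x y (Ne.symm hy),
        Matrix.kronecker_zero]
    · intro h; exact absurd (Finset.mem_univ x) h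
  have hVP : V * ((1 : Matrix (Fin m) (Fin m) ℂ) ⊗ₖ P x) = U x ⊗ₖ P x := by
    rw [hV, Finset.sum_mul]
    rw [Finset.sum_eq_single x]
    · rw [← Matrix.mul_kronecker_mul, mul_one, hPidem]
    · intro y _ hy
      rw [← Matrix.mul_kronecker_mul, mul_one, hPorth y x hy, Matrix.kronecker_zero]
    · intro h; exact absurd (Finset.mem_univ x) h
  have key : ((1 : Matrix (Fin m) (Fin m) ℂ) ⊗ₖ P x) *
      (V * (HWS ⊗ₖ (1 : Matrix (Fin dD) (Fin dD) ℂ)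
        + (1 : Matrix (Fin m) (Fin m) ℂ) ⊗ₖ HD)) *
      ((1 : Matrix (Fin m) (Fin m) ℂ) ⊗ₖ P x)
      = ((1 : Matrix (Fin m) (Fin m) ℂ) ⊗ₖ P x) *
      ((HWS ⊗ₖ (1 : Matrix (Fin dD) (Fin dD) ℂ)
        + (1 : Matrix (Fin m) (Fin m) ℂ) ⊗ₖ HD) * V) *
      ((1 : Matrix (Fin m) (Fin m) ℂ) ⊗ₖ P x) := by
    rw [hVcomm]
  have lhs : ((1 : Matrix (Fin m) (Fin m) ℂ) ⊗ₖ P x) *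
      (V * (HWS ⊗ₖ (1 : Matrix (Fin dD) (Fin dD) ℂ)
        + (1 : Matrix (Fin m) (Fin m) ℂ) ⊗ₖ HD)) *
      ((1 : Matrix (Fin m) (Fin m) ℂ) ⊗ₖ P x)
      = (U x * HWS) ⊗ₖ P x + U x ⊗ₖ (P x * HD * P x) := by
    rw [← mul_assoc, hPV, mul_add, add_mul]
    rw [mul_assoc (U x ⊗ₖ P x), mul_assoc (U x ⊗ₖ P x),
      ← Matrix.mul_kronecker_mul, ← Matrix.mul_kronecker_mul,
      ← Matrix.mul_kronecker_mul, ← Matrix.mul_kronecker_mul]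
    simp [hPidem, mul_assoc]
  have rhs : ((1 : Matrix (Fin m) (Fin m) ℂ) ⊗ₖ P x) *
      ((HWS ⊗ₖ (1 : Matrix (Fin dD) (Fin dD) ℂ)
        + (1 : Matrix (Fin m) (Fin m) ℂ) ⊗ₖ HD) * V) *
      ((1 : Matrix (Fin m) (Fin m) ℂ) ⊗ₖ P x)
      = (HWS * U x) ⊗ₖ P x + U x ⊗ₖ (P x * HD * P x) := by
    rw [mul_assoc, mul_assoc, hVP, ← mul_assoc, mul_add, add_mul]
    rw [← Matrix.mul_kronecker_mul, ← Matrix.mul_kronecker_mul,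
      ← Matrix.mul_kronecker_mul, ← Matrix.mul_kronecker_mul]
    simp [hPidem, mul_assoc]
  have hkron : (U x * HWS) ⊗ₖ P x = (HWS * U x) ⊗ₖ P x := by
    have := key
    rw [lhs, rhs] at this
    exact add_right_cancel this
  obtain ⟨k, l, hkl⟩ : ∃ k l, P x k l ≠ 0 := by
    by_contra h
    push_neg at h
    exact hPne x (Matrix.ext fun k l => h k l)
  ext i j
  have h0 := congrFun (congrFun hkron (i, k)) (j, l)
  simp only [Matrix.kroneckerMap_apply] at h0
  exact mul_right_cancel₀ hkl h0
end
end

section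
/- Energy conservation of feedback, necessity, part (ii) (from the proof of Lemma 4): Let H_WS be a Hermitian matrix on ℂ^m and H_D a Hermitian matrix on ℂ^{d_D}. Let {P_x}_{x∈X} be a complete orthogonal family of nonzero projections on ℂ^{d_D}, let U_x be unitary matrices on ℂ^m, and set V := ∑_{x∈X} U_x ⊗ P_x. If [V, H_WS ⊗ 1 + 1 ⊗ H_D] = 0, then for every pair x ≠ y with U_x ≠ U_y one has P_x H_D P_y = 0. -/
open Matrix
open scoped Kronecker Matrix ComplexOrder

noncomputable section

/-- Lemma 4, necessity part (ii): if the feedback unitary `V = ∑ x, U_x ⊗ P_x`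
conserves the total energy, then for outcomes `x ≠ y` with distinct conditional
unitaries, `P_x H_D P_y = 0`. -/
theorem feedback_energy_conserving_only_if_ii
    {m dD : ℕ} {X : Type*} [Fintype X]
    (HWS : Matrix (Fin m) (Fin m) ℂ) (HD : Matrix (Fin dD) (Fin dD) ℂ)
    (hHWS : HWS.IsHermitian) (hHD : HD.IsHermitian)
    (P : X → Matrix (Fin dD) (Fin dD) ℂ)
    (hPherm : ∀ x, (P x).IsHermitian)
    (hPidem : ∀ x, P x * P x = P x)
    (hPorth : ∀ x y, x ≠ y → P x * P y = 0)
    (hPsum : ∑ x, P x = 1)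
    (hPne : ∀ x, P x ≠ 0)
    (U : X → Matrix (Fin m) (Fin m) ℂ)
    (hU : ∀ x, U x ∈ Matrix.unitaryGroup (Fin m) ℂ)
    (hVcomm : (∑ x, U x ⊗ₖ P x) * (HWS ⊗ₖ (1 : Matrix (Fin dD) (Fin dD) ℂ)
        + (1 : Matrix (Fin m) (Fin m) ℂ) ⊗ₖ HD)
      = (HWS ⊗ₖ (1 : Matrix (Fin dD) (Fin dD) ℂ)
        + (1 : Matrix (Fin m) (Fin m) ℂ) ⊗ₖ HD) * (∑ x, U x ⊗ₖ P x)) :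
    ∀ x y, x ≠ y → U x ≠ U y → P x * HD * P y = 0 := by
  intro x y hxy hUxy
  set V : Matrix (Fin m × Fin dD) (Fin m × Fin dD) ℂ := ∑ z, U z ⊗ₖ P z with hV
  have hL : ((1 : Matrix (Fin m) (Fin m) ℂ) ⊗ₖ P x) * V = U x ⊗ₖ P x := by
    rw [hV, Finset.mul_sum, Finset.sum_eq_single x]
    · rw [← Matrix.mul_kronecker_mul, one_mul, hPidem]
    · intro z _ hz
      rw [← Matrix.mul_kronecker_mul, one_mul, hPorth x z (Ne.symm hz)]
      simp
    · intro h; exact absurd (Finset.mem_univ x) h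
  have hR : V * ((1 : Matrix (Fin m) (Fin m) ℂ) ⊗ₖ P y) = U y ⊗ₖ P y := by
    rw [hV, Finset.sum_mul, Finset.sum_eq_single y]
    · rw [← Matrix.mul_kronecker_mul, mul_one, hPidem]
    · intro z _ hz
      rw [← Matrix.mul_kronecker_mul, mul_one, hPorth z y hz]
      simp
    · intro h; exact absurd (Finset.mem_univ y) h
  have main : U x ⊗ₖ (P x * HD * P y) = U y ⊗ₖ (P x * HD * P y) := by
    have h := congrArg (fun A => ((1 : Matrix (Fin m) (Fin m) ℂ) ⊗ₖ P x) * A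
      * ((1 : Matrix (Fin m) (Fin m) ℂ) ⊗ₖ P y)) hVcomm
    simp only [← mul_assoc] at h
    rw [hL] at h
    rw [mul_assoc (((1 : Matrix (Fin m) (Fin m) ℂ) ⊗ₖ P x)
      * (HWS ⊗ₖ (1 : Matrix (Fin dD) (Fin dD) ℂ)
        + (1 : Matrix (Fin m) (Fin m) ℂ) ⊗ₖ HD)) V, hR] at h
    rw [Matrix.mul_add, Matrix.add_mul, Matrix.mul_add, Matrix.add_mul] at h
    simp only [← Matrix.mul_kronecker_mul] at h
    simp only [mul_one, one_mul] at h
    rw [hPorth x y hxy] at h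
    simpa using h
  by_contra hM
  obtain ⟨i, j, hij⟩ : ∃ i j, U x i j ≠ U y i j := by
    by_contra hc
    push_neg at hc
    exact hUxy (Matrix.ext hc)
  obtain ⟨k, l, hkl⟩ : ∃ k l, (P x * HD * P y) k l ≠ 0 := by
    by_contra hc
    push_neg at hc
    exact hM (Matrix.ext hc)
  have := congrFun (congrFun main (i, k)) (j, l)
  simp only [Matrix.kroneckerMap_apply] at this
  exact hij (mul_right_cancel₀ hkl this)
end
end

section
/- Bound on extracted work under invariant weight entropy (Lemma 5): Let H_W and H_S be Hermitian matrices on ℂ^{d_W} and ℂ^{d_S}, kT > 0, and let U be a unitary on ℂ^{d_W} ⊗ ℂ^{d_S} with [U, H_W ⊗ 1 + 1 ⊗ H_S] = 0. Let ρ_W be a density matrix on ℂ^{d_W} and φ̃ ∈ ℂ^{d_S} a unit vector; set σ := U(ρ_W ⊗ |φ̃⟩⟨φ̃|)U† and ρ'_W := tr₂ σ (the partial trace over the system factor). Define the extracted work W := F_{H_W}(ρ'_W) − F_{H_W}(ρ_W). If S(ρ'_W) = S(ρ_W), then W ≤ ⟨φ̃, H_S φ̃⟩ − λ_min(H_S),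 where λ_min(H_S) is the least eigenvalue of H_S. -/
open Matrix
open scoped Kronecker Matrix ComplexOrder

noncomputable section

/-! Since `U` commutes with the total Hamiltonian `H_W ⊗ 1 + 1 ⊗ H_S`, conjugation by `U`
preserves the total energy `tr((H_W ⊗ 1 + 1 ⊗ H_S) σ) = tr(H_W tr₂ σ) + tr(H_S tr₁ σ)`.
Comparing initial and final states, the energy gained by the weight is
`⟨φ̃, H_S φ̃⟩ - tr(H_S tr₁ σ)`, and `tr₁ σ` is a density matrix, so `tr(H_S tr₁ σ) ≥ λ_min(H_S)`.
When the entropy of the weight is unchanged, the work is exactly this energy gain. -/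

section PartialTrace

variable {m n : Type*}

theorem trace_ptrace1 [Fintype m] [Fintype n] (σ : Matrix (m × n) (m × n) ℂ) :
    (ptrace1 σ).trace = σ.trace := by
  simp only [trace, diag, ptrace1, Fintype.sum_prod_type]
  exact Finset.sum_comm

theorem trace_ptrace2 [Fintype m] [Fintype n] (σ : Matrix (m × n) (m × n) ℂ) :
    (ptrace2 σ).trace = σ.trace := by
  simp only [trace, diag, ptrace2, Fintype.sum_prod_type]

theorem ptrace1_kronecker [Fintype m] (A : Matrix m m ℂ) (B : Matrix n n ℂ) :
    ptrace1 (A ⊗ₖ B) = A.trace • B := by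
  ext k l
  simp [ptrace1, trace, Finset.sum_mul]

theorem ptrace2_kronecker [Fintype n] (A : Matrix m m ℂ) (B : Matrix n n ℂ) :
    ptrace2 (A ⊗ₖ B) = B.trace • A := by
  ext i j
  simp [ptrace2, trace, Finset.mul_sum, mul_comm]

theorem ptrace1_one_kronecker_mul [Fintype m] [Fintype n] [DecidableEq m] (B : Matrix n n ℂ)
    (σ : Matrix (m × n) (m × n) ℂ) :
    ptrace1 (((1 : Matrix m m ℂ) ⊗ₖ B) * σ) = B * ptrace1 σ := by
  ext k l
  simp only [ptrace1, mul_apply, Fintype.sum_prod_type, kroneckerMap_apply, one_apply,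
    ite_mul, one_mul, zero_mul, Finset.mul_sum, Finset.sum_ite_irrel, Finset.sum_const_zero,
    Finset.sum_ite_eq, Finset.mem_univ, if_true]
  exact Finset.sum_comm

theorem ptrace2_kronecker_one_mul [Fintype m] [Fintype n] [DecidableEq n] (A : Matrix m m ℂ)
    (σ : Matrix (m × n) (m × n) ℂ) :
    ptrace2 ((A ⊗ₖ (1 : Matrix n n ℂ)) * σ) = A * ptrace2 σ := by
  ext i j
  simp only [ptrace2, mul_apply, Fintype.sum_prod_type, kroneckerMap_apply, one_apply,
    mul_ite, mul_one, mul_zero, ite_mul, zero_mul, Finset.sum_ite_eq, Finset.mem_univ, if_true,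
    Finset.mul_sum]
  exact Finset.sum_comm

theorem trace_kronecker_one_add_one_kronecker_mul [Fintype m] [Fintype n] [DecidableEq m]
    [DecidableEq n] (A : Matrix m m ℂ) (B : Matrix n n ℂ) (σ : Matrix (m × n) (m × n) ℂ) :
    ((A ⊗ₖ (1 : Matrix n n ℂ) + (1 : Matrix m m ℂ) ⊗ₖ B) * σ).trace
      = (A * ptrace2 σ).trace + (B * ptrace1 σ).trace := by
  rw [Matrix.add_mul, trace_add, ← ptrace2_kronecker_one_mul, ← ptrace1_one_kronecker_mul,
    trace_ptrace2, trace_ptrace1]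

theorem Matrix.PosSemidef.ptrace1 [Fintype m] [Fintype n] {σ : Matrix (m × n) (m × n) ℂ}
    (hσ : σ.PosSemidef) :
    (_root_.ptrace1 σ).PosSemidef := by
  classical
  let slice (i : m) : Matrix (m × n) n ℂ := of fun p k => if p = (i, k) then 1 else 0
  have hsum : _root_.ptrace1 σ = ∑ i, (slice i)ᴴ * σ * slice i := by
    ext k l
    simp [slice, sum_apply, mul_apply, _root_.ptrace1]
  rw [hsum]
  exact Finset.sum_induction _ PosSemidef (fun _ _ => PosSemidef.add) PosSemidef.zero
    fun i _ => hσ.conjTranspose_mul_mul_same (slice i)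

end PartialTrace

theorem trace_mul_outer {n : Type*} [Fintype n] (H : Matrix n n ℂ) (v : n → ℂ) :
    (H * outer v).trace = star v ⬝ᵥ H *ᵥ v := by
  simp only [trace, diag, mul_apply, outer, vecMulVec_apply, dotProduct, mulVec, Finset.mul_sum]
  exact Finset.sum_congr rfl fun i _ => Finset.sum_congr rfl fun j _ => by ring

theorem trace_outer {n : Type*} [Fintype n] (v : n → ℂ) : (outer v).trace = star v ⬝ᵥ v := by
  simp [outer, trace, vecMulVec_apply, dotProduct, mul_comm]

theorem isDensityMatrix_outer {n : Type*} [Fintype n] {v : n → ℂ}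
    (hv : star v ⬝ᵥ v = 1) : IsDensityMatrix (outer v) :=
  ⟨posSemidef_vecMulVec_self_star v, by rw [trace_outer, hv]⟩

namespace IsDensityMatrix

variable {m n : Type*} [Fintype m] [Fintype n]

theorem kronecker {ρ : Matrix m m ℂ} {τ : Matrix n n ℂ} (hρ : IsDensityMatrix ρ)
    (hτ : IsDensityMatrix τ) : IsDensityMatrix (ρ ⊗ₖ τ) :=
  ⟨hρ.1.kronecker hτ.1, by rw [trace_kronecker, hρ.2, hτ.2, one_mul]⟩

theorem conj_unitary [DecidableEq n] {ρ U : Matrix n n ℂ} (hρ : IsDensityMatrix ρ)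
    (hU : U ∈ unitaryGroup n ℂ) : IsDensityMatrix (U * ρ * Uᴴ) :=
  ⟨hρ.1.mul_mul_conjTranspose_same U, by
    rw [trace_mul_cycle, ← star_eq_conjTranspose, Unitary.star_mul_self_of_mem hU, one_mul, hρ.2]⟩

theorem ptrace1 {σ : Matrix (m × n) (m × n) ℂ} (hσ : IsDensityMatrix σ) :
    IsDensityMatrix (_root_.ptrace1 σ) :=
  ⟨hσ.1.ptrace1, by rw [trace_ptrace1, hσ.2]⟩

end IsDensityMatrix

theorem trace_mul_conj_unitary_of_commute {n : Type*} [Fintype n] [DecidableEq n]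
    {H U : Matrix n n ℂ} (hU : U ∈ unitaryGroup n ℂ) (hHU : U * H = H * U) (M : Matrix n n ℂ) :
    (H * (U * M * Uᴴ)).trace = (H * M).trace := by
  rw [← Matrix.mul_assoc, ← Matrix.mul_assoc, ← hHU, Matrix.mul_assoc U H, trace_mul_cycle,
    ← star_eq_conjTranspose, Unitary.star_mul_self_of_mem hU, one_mul]

theorem lambdaMin_le_re_trace_mul {n : Type*} [Fintype n] [DecidableEq n] {H τ : Matrix n n ℂ}
    (hH : H.IsHermitian) (hτ : IsDensityMatrix τ) : lambdaMin H ≤ (H * τ).trace.re := by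
  set V : Matrix n n ℂ := (hH.eigenvectorUnitary : Matrix n n ℂ)
  set p : n → ℝ := fun i => ((star V * τ * V) i i).re
  have hτ' : IsDensityMatrix (star V * τ * V) := by
    simpa [star_eq_conjTranspose] using hτ.conj_unitary (star hH.eigenvectorUnitary).2
  have hp_nonneg (i : n) : 0 ≤ p i := (Complex.nonneg_iff.mp hτ'.1.diag_nonneg).1
  have hp_sum : ∑ i, p i = 1 := by
    simpa [trace, Complex.re_sum] using congrArg Complex.re hτ'.2
  have htrace : (H * τ).trace.re = ∑ i, hH.eigenvalues i * p i := by
    conv_lhs => rw [hH.spectral_theorem, Unitary.conjStarAlgAut_apply]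
    rw [Matrix.mul_assoc _ (star _), Matrix.mul_assoc, trace_mul_comm, Matrix.mul_assoc]
    simp [trace, diagonal_mul, Complex.re_sum, p, V, Matrix.mul_assoc]
  have hmin (i : n) : lambdaMin H ≤ hH.eigenvalues i := by
    rw [lambdaMin, dif_pos hH]
    exact ciInf_le (Finite.bddBelow_range _) i
  calc lambdaMin H = ∑ i, lambdaMin H * p i := by rw [← Finset.mul_sum, hp_sum, mul_one]
    _ ≤ ∑ i, hH.eigenvalues i * p i :=
      Finset.sum_le_sum fun i _ => mul_le_mul_of_nonneg_right (hmin i) (hp_nonneg i)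
    _ = (H * τ).trace.re := htrace.symm

theorem freeEnergy_sub_freeEnergy_of_vnEntropy_eq {n : Type*} [Fintype n] [DecidableEq n]
    {ρ ρ' : Matrix n n ℂ} (kT : ℝ) (H : Matrix n n ℂ) (hS : vnEntropy ρ' = vnEntropy ρ) :
    freeEnergy kT H ρ' - freeEnergy kT H ρ = (H * ρ').trace.re - (H * ρ).trace.re := by
  rw [freeEnergy, freeEnergy, hS]
  ring

theorem work_bound_invariant_weight_entropy_general
    {dW dS : ℕ}
    (HW : Matrix (Fin dW) (Fin dW) ℂ) (HS : Matrix (Fin dS) (Fin dS) ℂ)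
    (hHS : HS.IsHermitian)
    (kT : ℝ)
    (U : Matrix (Fin dW × Fin dS) (Fin dW × Fin dS) ℂ)
    (hU : U ∈ Matrix.unitaryGroup (Fin dW × Fin dS) ℂ)
    (hUcomm : U * (HW ⊗ₖ (1 : Matrix (Fin dS) (Fin dS) ℂ)
        + (1 : Matrix (Fin dW) (Fin dW) ℂ) ⊗ₖ HS)
      = (HW ⊗ₖ (1 : Matrix (Fin dS) (Fin dS) ℂ)
        + (1 : Matrix (Fin dW) (Fin dW) ℂ) ⊗ₖ HS) * U)
    (ρW : Matrix (Fin dW) (Fin dW) ℂ) (hρW : IsDensityMatrix ρW)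
    (φt : Fin dS → ℂ) (hφt : star φt ⬝ᵥ φt = 1)
    (hS : vnEntropy (ptrace2 (U * (ρW ⊗ₖ outer φt) * Uᴴ)) = vnEntropy ρW) :
    freeEnergy kT HW (ptrace2 (U * (ρW ⊗ₖ outer φt) * Uᴴ)) - freeEnergy kT HW ρW
      ≤ (star φt ⬝ᵥ HS.mulVec φt).re - lambdaMin HS := by
  have hσ := (hρW.kronecker (isDensityMatrix_outer hφt)).conj_unitary hU
  have henergy := trace_mul_conj_unitary_of_commute hU hUcomm (ρW ⊗ₖ outer φt)
  rw [trace_kronecker_one_add_one_kronecker_mul, trace_kronecker_one_add_one_kronecker_mul,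
    ptrace2_kronecker, ptrace1_kronecker, trace_outer, hφt, hρW.2, one_smul, one_smul,
    trace_mul_outer] at henergy
  have hground := lambdaMin_le_re_trace_mul hHS hσ.ptrace1
  rw [freeEnergy_sub_freeEnergy_of_vnEntropy_eq kT HW hS]
  have henergy_re := congrArg Complex.re henergy
  simp only [Complex.add_re] at henergy_re
  linarith

/-- Lemma 5: under energy-conserving feedback that leaves the weight's entropy
invariant, the extracted work is bounded by the energy of the post-measurement
state above the ground-state energy of the system. -/
theorem work_bound_invariant_weight_entropy
    {dW dS : ℕ}
    (HW : Matrix (Fin dW) (Fin dW) ℂ) (HS : Matrix (Fin dS) (Fin dS) ℂ)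
    (hHW : HW.IsHermitian) (hHS : HS.IsHermitian)
    (kT : ℝ) (hkT : 0 < kT)
    (U : Matrix (Fin dW × Fin dS) (Fin dW × Fin dS) ℂ)
    (hU : U ∈ Matrix.unitaryGroup (Fin dW × Fin dS) ℂ)
    (hUcomm : U * (HW ⊗ₖ (1 : Matrix (Fin dS) (Fin dS) ℂ)
        + (1 : Matrix (Fin dW) (Fin dW) ℂ) ⊗ₖ HS)
      = (HW ⊗ₖ (1 : Matrix (Fin dS) (Fin dS) ℂ)
        + (1 : Matrix (Fin dW) (Fin dW) ℂ) ⊗ₖ HS) * U)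
    (ρW : Matrix (Fin dW) (Fin dW) ℂ) (hρW : IsDensityMatrix ρW)
    (φt : Fin dS → ℂ) (hφt : star φt ⬝ᵥ φt = 1)
    (hS : vnEntropy (ptrace2 (U * (ρW ⊗ₖ outer φt) * Uᴴ)) = vnEntropy ρW) :
    freeEnergy kT HW (ptrace2 (U * (ρW ⊗ₖ outer φt) * Uᴴ)) - freeEnergy kT HW ρW
      ≤ (star φt ⬝ᵥ HS.mulVec φt).re - lambdaMin HS :=
  work_bound_invariant_weight_entropy_general HW HS hHS kT U hU hUcomm ρW hρW φt hφt hS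

end
end
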